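/- For ε > 0, define the rounding operator ⌈x⌉_γ (for γ > 1) as the smallest integer power of γ that is at least x. Define the ε-rounded delay of a path inductively by d'(∅) = 0 and d'(P·e) = ⌈d'(P) + d↑(e)⌉_{(1+ε)^{π(e)}}, where d↑(e) = max(d(e), δ) for some δ ≥ 0 and π: E → ℕ with π(e) ≥ 1. Then for every path P, d'(P) ≤ (1+ε)^{π(P)} (d(P) + π(P)·δ), where π(P) = Σ_{e∈P} π(e) and d(P) = Σ_{e∈P} d(e). -/
import Mathlib


/-- `expround γ x` is the smallest integer power of `γ` that is at least `x`
(for `x > 0`; it is `0` for `x ≤ 0`, matching `⌈0⌉_γ = -∞` in the source). -/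
noncomputable def expround (γ x : ℝ) : ℝ :=
  if x ≤ 0 then 0 else γ ^ ⌈Real.logb γ x⌉

/-- The ε-rounded delay of a path, where the head of the list is the *last*
edge of the path: `d'(∅) = 0` and `d'(P·e) = ⌈d'(P) + max(d e, δ)⌉_{(1+ε)^{π e}}`. -/
noncomputable def roundedDelay {F : Type} (ε δ : ℝ) (d : F → ℝ) (π : F → ℕ) :
    List F → ℝ
  | [] => 0
  | e :: P => expround ((1 + ε) ^ π e) (roundedDelay ε δ d π P + max (d e) δ)

lemma expround_le (γ x : ℝ) (hγ : 1 < γ) (hx : 0 ≤ x) : expround γ x ≤ γ * x := by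
  rcases eq_or_lt_of_le hx with h | h
  · simp [expround, ← h]
  · have hγ0 : (0 : ℝ) < γ := lt_trans one_pos hγ
    unfold expround
    rw [if_neg (not_le.mpr h)]
    have h1 : (γ : ℝ) ^ (⌈Real.logb γ x⌉ : ℤ) = γ ^ ((⌈Real.logb γ x⌉ : ℝ)) :=
      (Real.rpow_intCast γ _).symm
    rw [h1]
    calc γ ^ ((⌈Real.logb γ x⌉ : ℝ))
        ≤ γ ^ (Real.logb γ x + 1) := by
          apply Real.rpow_le_rpow_of_exponent_le hγ.le
          exact (Int.ceil_lt_add_one _).le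
      _ = γ * x := by
          rw [Real.rpow_add hγ0, Real.rpow_logb hγ0 (ne_of_gt hγ) h, Real.rpow_one]
          ring

lemma roundedDelay_nonneg {F : Type} (ε δ : ℝ) (hε : 0 < ε) (d : F → ℝ) (π : F → ℕ) (P : List F) :
    0 ≤ roundedDelay ε δ d π P := by
  induction P with
  | nil => simp [roundedDelay]
  | cons e P ih =>
    simp only [roundedDelay, expround]
    split
    · exact le_refl 0
    · positivity

/-- For every path `P`, the ε-rounded delay satisfies
`d'(P) ≤ (1+ε)^{π(P)} (d(P) + π(P)·δ)`. -/
theorem stmt_3 {F : Type} (ε δ : ℝ) (hε : 0 < ε) (hδ : 0 ≤ δ)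
    (d : F → ℝ) (hd : ∀ e, 0 ≤ d e) (π : F → ℕ) (hπ : ∀ e, 1 ≤ π e)
    (P : List F) :
    roundedDelay ε δ d π P
      ≤ (1 + ε) ^ ((P.map π).sum) * ((P.map d).sum + ((P.map π).sum : ℝ) * δ) := by
  induction P with
  | nil => simp [roundedDelay]
  | cons e P ih =>
    have h1ε : (1 : ℝ) < 1 + ε := by linarith
    have hg : (1 : ℝ) < (1 + ε) ^ π e := one_lt_pow₀ h1ε (Nat.one_le_iff_ne_zero.mp (hπ e))
    have hg0 : (0 : ℝ) < (1 + ε) ^ π e := lt_trans one_pos hg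
    have hS : (1 : ℝ) ≤ (1 + ε) ^ ((P.map π).sum) := one_le_pow₀ h1ε.le
    have hnn : 0 ≤ roundedDelay ε δ d π P + max (d e) δ := by
      have := roundedDelay_nonneg ε δ hε d π P
      have := hd e
      have : 0 ≤ max (d e) δ := le_max_of_le_left (hd e)
      linarith [roundedDelay_nonneg ε δ hε d π P]
    have step := expround_le ((1 + ε) ^ π e) (roundedDelay ε δ d π P + max (d e) δ) hg hnn
    simp only [roundedDelay, List.map_cons, List.sum_cons]
    refine le_trans step ?_
    have hmax : max (d e) δ ≤ d e + δ := max_le (by linarith [hd e]) (by linarith [hd e])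
    have key : roundedDelay ε δ d π P + max (d e) δ
        ≤ (1 + ε) ^ ((P.map π).sum) * ((d e + (P.map d).sum) + ((π e + (P.map π).sum : ℕ) : ℝ) * δ) := by
      have hπe : (1 : ℝ) ≤ (π e : ℝ) := by exact_mod_cast hπ e
      have hDS : 0 ≤ (P.map d).sum := List.sum_nonneg (by
        intro x hx
        obtain ⟨a, _, rfl⟩ := List.mem_map.mp hx
        exact hd a)
      have hc : ((π e + (P.map π).sum : ℕ) : ℝ) = (π e : ℝ) + ((P.map π).sum : ℝ) := by
        push_cast; ring
      rw [hc]
      have hp1 : (0:ℝ) ≤ d e + (π e : ℝ) * δ := by nlinarith [hd e]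
      nlinarith [ih, hmax, mul_nonneg (sub_nonneg.mpr hS) hp1,
        mul_nonneg (by linarith : (0:ℝ) ≤ (π e : ℝ) - 1) hδ]
    calc (1 + ε) ^ π e * (roundedDelay ε δ d π P + max (d e) δ)
        ≤ (1 + ε) ^ π e * ((1 + ε) ^ ((P.map π).sum) * ((d e + (P.map d).sum) + ((π e + (P.map π).sum : ℕ) : ℝ) * δ)) :=
          mul_le_mul_of_nonneg_left key hg0.le
      _ = (1 + ε) ^ (π e + (P.map π).sum) * (d e + (P.map d).sum + ((π e + (P.map π).sum : ℕ) : ℝ) * δ) := by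
          rw [pow_add]; ring
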